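/- LRF is the largest respectful function: if F is any respectful function, then F(R) ⊆ LRF(R) for every binary relation R on the states. -/

import Mathlib

universe u v

/-- `Progress Tr R S` means relation `R` progresses to relation `S`
in the labelled transition system with transition relation `Tr`. -/
def Progress {St : Type u} {Δ : Type v} (Tr : St → Δ → St → Prop)
    (R S : Set (St × St)) : Prop :=
  ∀ p q, (p, q) ∈ R →
    (∀ a p', Tr p a p' → ∃ q', Tr q a q' ∧ (p', q') ∈ S) ∧
    (∀ a q', Tr q a q' → ∃ p', Tr p a p' ∧ (p', q') ∈ S)

/-- A function on relations is respectful if whenever `R ⊆ S` and `R ⤳ S`,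
also `F R ⊆ F S` and `F R ⤳ F S`. -/
def Respectful {St : Type u} {Δ : Type v} (Tr : St → Δ → St → Prop)
    (F : Set (St × St) → Set (St × St)) : Prop :=
  ∀ R S : Set (St × St), R ⊆ S → Progress Tr R S →
    F R ⊆ F S ∧ Progress Tr (F R) (F S)

/-- Milner's stratification of bisimilarity: `∼₀ = univ`,
`∼_{α+1} = ⋃ {X | X ⤳ ∼_α}`, `∼_λ = ⋂_{β<λ} ∼_β` for limits. -/
noncomputable def Strat {St : Type u} {Δ : Type v} (Tr : St → Δ → St → Prop)
    (α : Ordinal.{w}) : Set (St × St) :=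
  Ordinal.limitRecOn α
    Set.univ
    (fun _ ih => ⋃₀ {X | Progress Tr X ih})
    (fun o _ ih => ⋂ (β : Ordinal.{w}) (h : β < o), ih β h)

/-- `LRF R = ⋂ {∼_α | R ⊆ ∼_α}`. -/
noncomputable def LRF {St : Type u} {Δ : Type v} (Tr : St → Δ → St → Prop)
    (R : Set (St × St)) : Set (St × St) :=
  ⋂ (α : Ordinal.{u}) (_ : R ⊆ Strat.{u, v, u} Tr α), Strat.{u, v, u} Tr α

/-!
Each level `∼_α` contains every relation that progresses to it (induction on `α`), so
`∼_{α+1} ⊆ ∼_α`. Then, by induction on `α`, a respectful `F` maps relations contained in `∼_α`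
into `∼_α`: if `R ⊆ ∼_{α+1}` then `R ⊆ ∼_α` and `R ⤳ ∼_α`, so respectfulness gives
`F R ⤳ F ∼_α ⊆ ∼_α`, i.e. `F R ⊆ ∼_{α+1}`; limit levels are intersections. Hence `F R` lies in
every `∼_α` containing `R`, which is `LRF R`.
-/

section Strat

variable {St : Type u} {Δ : Type v} {Tr : St → Δ → St → Prop}

theorem Progress.mono {R' R S S' : Set (St × St)} (hR : R' ⊆ R) (hS : S ⊆ S')
    (h : Progress Tr R S) : Progress Tr R' S' := by
  intro p q hpq
  obtain ⟨forth, back⟩ := h p q (hR hpq)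
  refine ⟨fun a p' hp => ?_, fun a q' hq => ?_⟩
  · obtain ⟨q', hq, hmem⟩ := forth a p' hp
    exact ⟨q', hq, hS hmem⟩
  · obtain ⟨p', hp, hmem⟩ := back a q' hq
    exact ⟨p', hp, hS hmem⟩

@[simp]
theorem Strat_zero : Strat.{u, v, w} Tr 0 = Set.univ := by
  simp [Strat]

theorem Strat_add_one (α : Ordinal.{w}) :
    Strat Tr (α + 1) = ⋃₀ {X | Progress Tr X (Strat Tr α)} := by
  simp [Strat]

theorem Strat_of_isSuccLimit {α : Ordinal.{w}} (hα : Order.IsSuccLimit α) :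
    Strat Tr α = ⋂ (β : Ordinal.{w}) (_ : β < α), Strat Tr β := by
  simp [Strat, Ordinal.limitRecOn_limit _ _ _ _ hα]

theorem Strat_subset_of_isSuccLimit {α β : Ordinal.{w}} (hα : Order.IsSuccLimit α)
    (hβ : β < α) : Strat Tr α ⊆ Strat Tr β := by
  rw [Strat_of_isSuccLimit hα]
  exact Set.biInter_subset_of_mem hβ

theorem progress_Strat_add_one (α : Ordinal.{w}) :
    Progress Tr (Strat Tr (α + 1)) (Strat Tr α) := by
  rw [Strat_add_one]
  rintro p q ⟨X, hX, hpq⟩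
  exact hX p q hpq

theorem subset_Strat_add_one_of_progress {X : Set (St × St)} {α : Ordinal.{w}}
    (h : Progress Tr X (Strat Tr α)) : X ⊆ Strat Tr (α + 1) := by
  rw [Strat_add_one]
  exact Set.subset_sUnion_of_mem h

theorem subset_Strat_of_progress {X : Set (St × St)} (α : Ordinal.{w})
    (h : Progress Tr X (Strat Tr α)) : X ⊆ Strat Tr α := by
  induction α using Ordinal.limitRecOn generalizing X with
  | zero => simp
  | add_one γ ih =>
    have hsucc : Strat Tr (γ + 1) ⊆ Strat Tr γ := ih (progress_Strat_add_one γ)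
    exact subset_Strat_add_one_of_progress (h.mono subset_rfl hsucc)
  | limit o ho ih =>
    rw [Strat_of_isSuccLimit ho]
    exact Set.subset_iInter₂ fun β hβ =>
      ih β hβ (h.mono subset_rfl (Strat_subset_of_isSuccLimit ho hβ))

theorem Strat_add_one_subset (α : Ordinal.{w}) : Strat Tr (α + 1) ⊆ Strat Tr α :=
  subset_Strat_of_progress α (progress_Strat_add_one α)

theorem Respectful.map_subset_Strat {F : Set (St × St) → Set (St × St)}
    (hF : Respectful Tr F) (α : Ordinal.{w}) {R : Set (St × St)} (hR : R ⊆ Strat Tr α) :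
    F R ⊆ Strat Tr α := by
  induction α using Ordinal.limitRecOn generalizing R with
  | zero => simp
  | add_one γ ih =>
    have hRγ : R ⊆ Strat Tr γ := hR.trans (Strat_add_one_subset γ)
    have hRprog : Progress Tr R (Strat Tr γ) := (progress_Strat_add_one γ).mono hR subset_rfl
    obtain ⟨-, hprog⟩ := hF R (Strat Tr γ) hRγ hRprog
    exact subset_Strat_add_one_of_progress (hprog.mono subset_rfl (ih subset_rfl))
  | limit o ho ih =>
    rw [Strat_of_isSuccLimit ho]
    exact Set.subset_iInter₂ fun β hβ => ih β hβ (hR.trans (Strat_subset_of_isSuccLimit ho hβ))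

end Strat

theorem lrf_largest {St : Type u} {Δ : Type v} (Tr : St → Δ → St → Prop)
    (F : Set (St × St) → Set (St × St)) (hF : Respectful Tr F) :
    ∀ R : Set (St × St), F R ⊆ LRF Tr R :=
  fun R => Set.subset_iInter₂ fun α hR => hF.map_subset_Strat α hR
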